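/- Let A ∈ ℝ^{n×n} and let Q, R ∈ ℝ^{n×n} be symmetric positive definite matrices satisfying the Lyapunov equation Aᵀ Q + Q A = −R. Then A is exponentially stable: there exist constants c > 0 and μ > 0 such that ‖e^{tA} x0‖ ≤ c e^{−μt} ‖x0‖ for all t ≥ 0 and all x0 ∈ ℝ^n. -/

import Mathlib

open Matrix NormedSpace

lemma aux_deriv (n : ℕ) (A : Matrix (Fin n) (Fin n) ℝ) (x0 : Fin n → ℝ) (t : ℝ) :
    HasDerivAt (fun s : ℝ => (exp (s • A)).mulVec x0)
      (A.mulVec ((exp (t • A)).mulVec x0)) t := by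
  letI : NormedRing (Matrix (Fin n) (Fin n) ℝ) := Matrix.linftyOpNormedRing
  letI : NormedAlgebra ℝ (Matrix (Fin n) (Fin n) ℝ) := Matrix.linftyOpNormedAlgebra
  have h1 : HasDerivAt (fun u : ℝ => exp (u • A)) (A * exp (t • A)) t :=
    hasDerivAt_exp_smul_const' (𝕂 := ℝ) A t
  let Llin : Matrix (Fin n) (Fin n) ℝ →ₗ[ℝ] (Fin n → ℝ) :=
    { toFun := fun M => M.mulVec x0
      map_add' := fun M N => Matrix.add_mulVec M N x0
      map_smul' := fun c M => Matrix.smul_mulVec c M x0 }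
  let L : Matrix (Fin n) (Fin n) ℝ →L[ℝ] (Fin n → ℝ) :=
    Llin.mkContinuous ‖x0‖ (fun M => by
      simpa [Llin, mul_comm] using Matrix.linfty_opNorm_mulVec M x0)
  have h2 := (L.hasFDerivAt.comp_hasDerivAt t h1)
  rw [Matrix.mulVec_mulVec]
  exact h2

lemma aux_bounds (n : ℕ) (R : Matrix (Fin n) (Fin n) ℝ) (hR : R.PosDef) :
    ∃ m M : ℝ, 0 < m ∧ 0 < M ∧ ∀ x : Fin n → ℝ,
      m * ‖x‖ ^ 2 ≤ x ⬝ᵥ R.mulVec x ∧ x ⬝ᵥ R.mulVec x ≤ M * ‖x‖ ^ 2 := by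
  rcases Nat.eq_zero_or_pos n with hn | hn
  · subst hn
    refine ⟨1, 1, one_pos, one_pos, fun x => ?_⟩
    have hx : x = 0 := Subsingleton.elim x 0
    simp only [hx, norm_zero]
    simp
  · have hpos : ∀ x : Fin n → ℝ, x ≠ 0 → 0 < x ⬝ᵥ R.mulVec x := by
      intro x hx
      simpa using hR.dotProduct_mulVec_pos hx
    haveI : Nonempty (Fin n) := ⟨⟨0, hn⟩⟩
    have hfc : Continuous fun x : Fin n → ℝ => x ⬝ᵥ R.mulVec x := by
      have : (fun x : Fin n → ℝ => x ⬝ᵥ R.mulVec x)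
          = fun x : Fin n → ℝ => ∑ i, ∑ j, x i * (R i j * x j) := by
        funext x
        simp [dotProduct, Matrix.mulVec, Finset.mul_sum]
      rw [this]
      fun_prop
    set S := Metric.sphere (0 : Fin n → ℝ) 1 with hS
    have hScpt : IsCompact S := isCompact_sphere 0 1
    have hSne : S.Nonempty := by
      refine ⟨fun _ => 1, mem_sphere_zero_iff_norm.mpr ?_⟩
      rw [pi_norm_const (1:ℝ)]
      simp
    obtain ⟨u, huS, hmin⟩ := hScpt.exists_isMinOn hSne hfc.continuousOn
    obtain ⟨v, hvS, hmax⟩ := hScpt.exists_isMaxOn hSne hfc.continuousOn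
    have hu0 : u ≠ 0 := by
      intro h
      have := mem_sphere_zero_iff_norm.mp huS
      simp [h] at this
    have hm : 0 < u ⬝ᵥ R.mulVec u := hpos u hu0
    have hkey : ∀ x : Fin n → ℝ,
        (u ⬝ᵥ R.mulVec u) * ‖x‖ ^ 2 ≤ x ⬝ᵥ R.mulVec x ∧
        x ⬝ᵥ R.mulVec x ≤ (v ⬝ᵥ R.mulVec v) * ‖x‖ ^ 2 := by
      intro x
      rcases eq_or_ne x 0 with rfl | hx
      · simp
      · have hr : (0:ℝ) < ‖x‖ := norm_pos_iff.mpr hx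
        set y : Fin n → ℝ := ‖x‖⁻¹ • x with hy
        have hyS : y ∈ S := by
          have : ‖y‖ = 1 := by
            rw [hy, norm_smul]
            simp [abs_of_nonneg (inv_nonneg.mpr hr.le), inv_mul_cancel₀ hr.ne']
          exact mem_sphere_zero_iff_norm.mpr this
        have hyval : y ⬝ᵥ R.mulVec y = ‖x‖⁻¹ * (‖x‖⁻¹ * (x ⬝ᵥ R.mulVec x)) := by
          simp [hy, Matrix.mulVec_smul, smul_dotProduct, dotProduct_smul,
            smul_eq_mul]
          try ring
        have h1 : u ⬝ᵥ R.mulVec u ≤ y ⬝ᵥ R.mulVec y := hmin hyS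
        have h2 : y ⬝ᵥ R.mulVec y ≤ v ⬝ᵥ R.mulVec v := hmax hyS
        rw [hyval] at h1 h2
        constructor
        · have := mul_le_mul_of_nonneg_left h1 (by positivity : (0:ℝ) ≤ ‖x‖ ^ 2)
          calc (u ⬝ᵥ R.mulVec u) * ‖x‖ ^ 2 = ‖x‖ ^ 2 * (u ⬝ᵥ R.mulVec u) := by ring
          _ ≤ ‖x‖ ^ 2 * (‖x‖⁻¹ * (‖x‖⁻¹ * (x ⬝ᵥ R.mulVec x))) := this
          _ = x ⬝ᵥ R.mulVec x := by field_simp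
        · have := mul_le_mul_of_nonneg_left h2 (by positivity : (0:ℝ) ≤ ‖x‖ ^ 2)
          calc x ⬝ᵥ R.mulVec x = ‖x‖ ^ 2 * (‖x‖⁻¹ * (‖x‖⁻¹ * (x ⬝ᵥ R.mulVec x))) := by
                field_simp
          _ ≤ ‖x‖ ^ 2 * (v ⬝ᵥ R.mulVec v) := this
          _ = (v ⬝ᵥ R.mulVec v) * ‖x‖ ^ 2 := by ring
    exact ⟨_, _, hm, lt_of_lt_of_le hm (hmax huS), hkey⟩

theorem statement_10 (n : ℕ) (A Q R : Matrix (Fin n) (Fin n) ℝ)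
    (hQ : Q.PosDef) (hR : R.PosDef)
    (hLyap : Aᵀ * Q + Q * A = -R) :
    ∃ c : ℝ, 0 < c ∧ ∃ μ : ℝ, 0 < μ ∧
      ∀ t : ℝ, 0 ≤ t → ∀ x0 : Fin n → ℝ,
        ‖(exp (t • A)).mulVec x0‖ ≤ c * Real.exp (-μ * t) * ‖x0‖ := by
  obtain ⟨qm, qM, hqm, hqM, hQb⟩ := aux_bounds n Q hQ
  obtain ⟨rm, rM, hrm, hrM, hRb⟩ := aux_bounds n R hR
  set α : ℝ := rm / qM with hαdef
  have hα : 0 < α := div_pos hrm hqM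
  refine ⟨Real.sqrt (qM / qm), Real.sqrt_pos.mpr (div_pos hqM hqm), α / 2, by positivity, ?_⟩
  intro t ht x0
  set x : ℝ → Fin n → ℝ := fun s => (exp (s • A)).mulVec x0 with hxdef
  have hx0 : x 0 = x0 := by simp [hxdef]
  set g : ℝ → ℝ := fun s => x s ⬝ᵥ Q.mulVec (x s) with hgdef
  -- key algebraic identity
  have key : ∀ y : Fin n → ℝ,
      A.mulVec y ⬝ᵥ Q.mulVec y + y ⬝ᵥ Q.mulVec (A.mulVec y) = -(y ⬝ᵥ R.mulVec y) := by
    intro y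
    have h1 : A.mulVec y ⬝ᵥ Q.mulVec y = y ⬝ᵥ (Aᵀ * Q).mulVec y := by
      rw [← Matrix.mulVec_mulVec, Matrix.dotProduct_mulVec y Aᵀ, Matrix.vecMul_transpose]
    have h2 : y ⬝ᵥ Q.mulVec (A.mulVec y) = y ⬝ᵥ (Q * A).mulVec y := by
      rw [Matrix.mulVec_mulVec]
    rw [h1, h2, ← dotProduct_add, ← Matrix.add_mulVec, hLyap, Matrix.neg_mulVec,
      dotProduct_neg]
  -- derivative of g
  have hg' : ∀ s : ℝ, HasDerivAt g (-(x s ⬝ᵥ R.mulVec (x s))) s := by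
    intro s
    have hx' : HasDerivAt (fun u : ℝ => x u) (A.mulVec (x s)) s := aux_deriv n A x0 s
    have hxi : ∀ i, HasDerivAt (fun u : ℝ => x u i) (A.mulVec (x s) i) s :=
      fun i => hasDerivAt_pi.mp hx' i
    have hgs : HasDerivAt g
        (∑ i, (A.mulVec (x s) i * Q.mulVec (x s) i
          + x s i * Q.mulVec (A.mulVec (x s)) i)) s := by
      have hge : g = fun u => ∑ i, x u i * ∑ j, Q i j * x u j := by
        funext u
        simp [hgdef, dotProduct, Matrix.mulVec]
      rw [hge]
      refine HasDerivAt.fun_sum fun i _ => ?_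
      have h2 : HasDerivAt (fun u : ℝ => ∑ j, Q i j * x u j)
          (∑ j, Q i j * A.mulVec (x s) j) s :=
        HasDerivAt.fun_sum fun j _ => (hxi j).const_mul (Q i j)
      have := (hxi i).mul h2
      exact this
    have heq : (∑ i, (A.mulVec (x s) i * Q.mulVec (x s) i
          + x s i * Q.mulVec (A.mulVec (x s)) i)) = -(x s ⬝ᵥ R.mulVec (x s)) := by
      rw [Finset.sum_add_distrib]
      exact key (x s)
    rwa [heq] at hgs
  -- the auxiliary function h is antitone
  set E : ℝ → ℝ := fun s => Real.exp (α * s) with hEdef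
  have hh' : ∀ s : ℝ, HasDerivAt (fun u => g u * E u)
      ((-(x s ⬝ᵥ R.mulVec (x s)) + α * g s) * E s) s := by
    intro s
    have he : HasDerivAt E (α * E s) s := by
      simpa [hEdef, mul_comm] using ((hasDerivAt_id s).const_mul α).exp
    have := (hg' s).mul he
    exact this.congr_deriv (by ring)
  have hnonpos : ∀ s : ℝ, ((-(x s ⬝ᵥ R.mulVec (x s)) + α * g s) * E s) ≤ 0 := by
    intro s
    apply mul_nonpos_of_nonpos_of_nonneg _ (Real.exp_nonneg _)
    have hb1 : rm * ‖x s‖ ^ 2 ≤ x s ⬝ᵥ R.mulVec (x s) := (hRb (x s)).1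
    have hb2 : g s ≤ qM * ‖x s‖ ^ 2 := (hQb (x s)).2
    have hb3 : α * g s ≤ α * (qM * ‖x s‖ ^ 2) := mul_le_mul_of_nonneg_left hb2 hα.le
    have hαq : α * qM = rm := div_mul_cancel₀ rm hqM.ne'
    nlinarith [hb1, hb3]
  have hmono : Antitone (fun u => g u * E u) :=
    antitone_of_hasDerivAt_nonpos hh' hnonpos
  have e1 : g t * E t ≤ g 0 := by
    have := hmono ht
    simpa [hEdef] using this
  have e2 : g 0 ≤ qM * ‖x0‖ ^ 2 := by
    simp only [hgdef]
    rw [hx0]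
    exact (hQb x0).2
  have e3 : qm * ‖x t‖ ^ 2 ≤ g t := (hQb (x t)).1
  have epos : (0:ℝ) < E t := Real.exp_pos _
  have h5 : qm * ‖x t‖ ^ 2 * E t ≤ qM * ‖x0‖ ^ 2 :=
    le_trans (le_trans (mul_le_mul_of_nonneg_right e3 epos.le) e1) e2
  have main : ‖x t‖ ^ 2 ≤ qM / qm * Real.exp (-(α * t)) * ‖x0‖ ^ 2 := by
    rw [Real.exp_neg,
      show qM / qm * (Real.exp (α * t))⁻¹ * ‖x0‖ ^ 2
        = qM * ‖x0‖ ^ 2 / (qm * Real.exp (α * t)) by field_simp; try ring,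
      le_div_iff₀ (by positivity)]
    calc ‖x t‖ ^ 2 * (qm * Real.exp (α * t)) = qm * ‖x t‖ ^ 2 * E t := by
          rw [hEdef]; ring
    _ ≤ qM * ‖x0‖ ^ 2 := h5
  refine le_of_pow_le_pow_left₀ two_ne_zero (by positivity) ?_
  rw [mul_pow, mul_pow, Real.sq_sqrt (by positivity : (0:ℝ) ≤ qM / qm)]
  have hesq : Real.exp (-(α / 2) * t) ^ 2 = Real.exp (-(α * t)) := by
    rw [sq, ← Real.exp_add]
    ring_nf
  calc ‖x t‖ ^ 2 ≤ qM / qm * Real.exp (-(α * t)) * ‖x0‖ ^ 2 := main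
  _ = qM / qm * Real.exp (-(α / 2) * t) ^ 2 * ‖x0‖ ^ 2 := by rw [hesq]
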